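/- Let k > 0, λ be a k-ineffable' cardinal, and g: λ^k → λ^k. Then there exists an infinite set B ⊆ λ such that g has at most ot(k) regressive values on B^k. -/

import Mathlib

/-!
Ineffability gives every regressive function on `λ` a cofinal fibre. Applied to `Ordinal.pred`
on `ω`, and to the least index at which a short fundamental sequence passes a given ordinal, both
of which have bounded fibres, this shows that `λ` is uncountable and regular.

Fix an injective coding `code` of finite tuples of ordinals below `λ` by ordinals below `λ`; its
closure points form a club `C`. To a `k`-set `A` attach the table of the regressive values
`g x` for `x ∈ A^k`, indexed by the positions of the entries of `x` in `A`. When `min A ∈ C` the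
code of this table lies below `min A`, so ineffability makes it constant on the `k`-subsets of a
stationary `S`; put `B = S ∩ C`. A regressive `x ∈ B^k` extends to a `k`-set `A ⊆ B` that has
the range of `x` as an initial segment, so `g x` is read off the common table at the position
given by the order pattern of `x`. Hence `g x` depends only on the order type of `x`.
-/

/-- `ot k`: the number of order types of elements of `ℕ^k`. -/
noncomputable def ot (k : ℕ) : ℕ :=
  Nat.card (Quot fun x y : Fin k → ℕ => ∀ i j, x i < x j ↔ y i < y j)

/-- `C` is a closed unbounded subset of `λ`: `sup C = λ`, and any limit
`x < λ` which is a sup of elements of `C` below it lies in `C`. -/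
def IsClubIn (lam : Ordinal) (C : Set Ordinal) : Prop :=
  C ⊆ Set.Iio lam ∧ sSup C = lam ∧
    ∀ x : Ordinal, x < lam → Order.IsSuccLimit x → sSup (C ∩ Set.Iio x) = x → x ∈ C

/-- `A` is a stationary subset of `λ`: it meets every club in `λ`. -/
def IsStationaryIn (lam : Ordinal) (A : Set Ordinal) : Prop :=
  A ⊆ Set.Iio lam ∧ ∀ C : Set Ordinal, IsClubIn lam C → (A ∩ C).Nonempty

/-- `λ` is `k`-ineffable′: every regressive `f : S_k(λ) → λ` is constant on
`S_k(A)` for some stationary `A ⊆ λ`. -/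
def IsIneffablePrime (k : ℕ) (lam : Ordinal) : Prop :=
  ∀ f : Finset Ordinal → Ordinal,
    (∀ A : Finset Ordinal, A.card = k → (∀ a ∈ A, a < lam) →
      f A < sInf (↑A : Set Ordinal) ∨ sInf (↑A : Set Ordinal) = 0) →
    ∃ S : Set Ordinal, IsStationaryIn lam S ∧
      ∃ c : Ordinal, ∀ A : Finset Ordinal, A.card = k → ↑A ⊆ S → f A = c

open Finset

namespace Finset

variable {α : Type*} [LinearOrder α]

def countLT (s : Finset α) (a : α) : ℕ := #{b ∈ s | b < a}

theorem strictMonoOn_countLT (s : Finset α) : StrictMonoOn s.countLT s := fun a ha _ _ hab =>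
  card_lt_card <| (ssubset_iff_of_subset fun _ hb => by
    simp only [mem_filter] at hb ⊢
    exact ⟨hb.1, hb.2.trans hab⟩).2 ⟨a, by simp [mem_coe.1 ha, hab], by simp⟩

theorem countLT_lt_card (s : Finset α) {a : α} (ha : a ∈ s) : s.countLT a < #s :=
  card_lt_card <| filter_ssubset.2 ⟨a, ha, lt_irrefl a⟩

theorem countLT_eq_of_initial {s t : Finset α} (hst : s ⊆ t)
    (hinit : ∀ a ∈ s, ∀ b ∈ t, b < a → b ∈ s) {a : α} (ha : a ∈ s) :
    t.countLT a = s.countLT a := by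
  unfold countLT
  congr 1
  ext b
  simp only [mem_filter]
  exact ⟨fun hb => ⟨hinit a ha b hb.1 hb.2, hb.2⟩, fun hb => ⟨hst hb.1, hb.2⟩⟩

theorem sInf_coe_eq_of_initial {α : Type*} [ConditionallyCompleteLinearOrder α] {s t : Finset α}
    (hst : s ⊆ t) (hinit : ∀ a ∈ s, ∀ b ∈ t, b < a → b ∈ s) (hs : s.Nonempty) :
    sInf (t : Set α) = sInf (s : Set α) := by
  refine le_antisymm (csInf_le_csInf t.bddBelow hs (coe_subset.2 hst)) (not_lt.1 fun h => ?_)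
  have hmem := (hs.mono hst).csInf_mem
  exact h.not_ge (csInf_le s.bddBelow (hinit _ hs.csInf_mem _ hmem h))

theorem card_image_eq_card_image_of_eq_iff {ι α β : Type*} [DecidableEq α] [DecidableEq β]
    {x : ι → α} {y : ι → β} (h : ∀ i j, x i = x j ↔ y i = y j) (s : Finset ι) :
    #(s.image x) = #(s.image y) := by
  classical
  induction s using Finset.induction_on with
  | empty => simp
  | insert j s hj ih => simp only [image_insert, card_insert_eq_ite, mem_image, h, ih]

end Finset

section OrderPattern

variable {ι α β : Type*} [LinearOrder α] [LinearOrder β]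

def SameOrderType (x : ι → α) (y : ι → β) : Prop := ∀ i j, x i < x j ↔ y i < y j

theorem SameOrderType.symm {x : ι → α} {y : ι → β} (h : SameOrderType x y) :
    SameOrderType y x := fun i j => (h i j).symm

theorem SameOrderType.trans {γ : Type*} [LinearOrder γ] {x : ι → α} {y : ι → β} {z : ι → γ}
    (h₁ : SameOrderType x y) (h₂ : SameOrderType y z) : SameOrderType x z := fun i j =>
  (h₁ i j).trans (h₂ i j)

theorem SameOrderType.equivalence : Equivalence (SameOrderType : (ι → α) → (ι → α) → Prop) :=
  ⟨fun _ _ _ => Iff.rfl, SameOrderType.symm, SameOrderType.trans⟩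

theorem SameOrderType.eq_iff {x : ι → α} {y : ι → β} (h : SameOrderType x y) (i j : ι) :
    x i = x j ↔ y i = y j := by
  rw [← not_iff_not]
  simp only [← ne_eq, ne_iff_lt_or_gt, h i j, h j i]

variable [Fintype ι]

def orderPattern (x : ι → α) (i : ι) : ℕ := (univ.image x).countLT (x i)

theorem orderPattern_lt_card (x : ι → α) (i : ι) : orderPattern x i < Fintype.card ι :=
  ((univ.image x).countLT_lt_card (mem_image_of_mem x (mem_univ i))).trans_le card_image_le

theorem sameOrderType_orderPattern (x : ι → α) : SameOrderType (orderPattern x) x := fun i j =>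
  (univ.image x).strictMonoOn_countLT.lt_iff_lt (by simp) (by simp)

theorem SameOrderType.orderPattern_eq {x : ι → α} {y : ι → β}
    (h : SameOrderType x y) : orderPattern x = orderPattern y := by
  funext i
  simp only [orderPattern, countLT, filter_image]
  rw [card_image_eq_card_image_of_eq_iff h.eq_iff]
  congr 2
  ext j
  simp [h j i]

end OrderPattern

theorem finite_quot_sameOrderType (k : ℕ) :
    Finite (Quot (SameOrderType : (Fin k → ℕ) → (Fin k → ℕ) → Prop)) := by
  refine Finite.of_surjective (fun σ : Fin k → Fin k => Quot.mk _ fun i => (σ i : ℕ)) ?_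
  rintro ⟨z⟩
  exact ⟨fun i => ⟨orderPattern z i, (orderPattern_lt_card z i).trans_eq (Fintype.card_fin k)⟩,
    Quot.sound (sameOrderType_orderPattern z)⟩

theorem finite_image_and_ncard_le_ot {k : ℕ} {α β : Type*} [LinearOrder α]
    (g : (Fin k → α) → β) (X : Set (Fin k → α))
    (hg : ∀ x₁ ∈ X, ∀ x₂ ∈ X, SameOrderType x₁ x₂ → g x₁ = g x₂) :
    (g '' X).Finite ∧ (g '' X).ncard ≤ ot k := by
  rcases X.eq_empty_or_nonempty with rfl | ⟨x₀, -⟩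
  · simp
  have : Nonempty (Fin k → α) := ⟨x₀⟩
  have := finite_quot_sameOrderType k
  let τ : (Fin k → α) → Quot (SameOrderType : (Fin k → ℕ) → (Fin k → ℕ) → Prop) :=
    fun x => Quot.mk _ (orderPattern x)
  have hτ : ∀ x₁ x₂, τ x₁ = τ x₂ → SameOrderType x₁ x₂ := fun x₁ x₂ h =>
    (sameOrderType_orderPattern x₁).symm.trans <|
      (SameOrderType.equivalence.eqvGen_iff.1 (Quot.eq.1 h)).trans (sameOrderType_orderPattern x₂)
  have hinj : Set.InjOn (τ ∘ Function.invFunOn g X) (g '' X) := by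
    intro y₁ hy₁ y₂ hy₂ h
    rw [← Function.invFunOn_eq hy₁, ← Function.invFunOn_eq hy₂]
    exact hg _ (Function.invFunOn_mem hy₁) _ (Function.invFunOn_mem hy₂) (hτ _ _ h)
  refine ⟨Set.Finite.of_finite_image (Set.toFinite _) hinj, ?_⟩
  calc (g '' X).ncard ≤ (Set.univ : Set (Quot _)).ncard :=
        Set.ncard_le_ncard_of_injOn _ (fun _ _ => Set.mem_univ _) hinj (Set.toFinite _)
    _ = ot k := Set.ncard_univ _

open Ordinal Order Set

universe u v

section ConditionallyCompleteLinearOrderBot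

variable {α : Type*} [ConditionallyCompleteLinearOrderBot α] {X : Set α} {lam : α}

theorem csSup_eq_iff_forall_lt_exists_gt {x : α} (hX : X ⊆ Iio x) :
    sSup X = x ↔ ∀ β < x, ∃ b ∈ X, β < b := by
  rcases X.eq_empty_or_nonempty with rfl | hne
  · simp only [csSup_empty, mem_empty_iff_false, false_and, exists_false, imp_false, not_lt]
    exact ⟨fun h β => h ▸ bot_le, fun h => bot_le.antisymm (h ⊥)⟩
  · refine ⟨fun h β hβ => exists_lt_of_lt_csSup hne (h ▸ hβ), fun h => ?_⟩
    exact csSup_eq_of_forall_le_of_forall_lt_exists_gt hne (fun b hb => (hX hb).le) h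

theorem infinite_of_forall_exists_gt (hX : X ⊆ Iio lam) (hlam : ⊥ < lam)
    (h : ∀ β < lam, ∃ b ∈ X, β < b) : X.Infinite := by
  intro hfin
  obtain ⟨b₀, hb₀, -⟩ := h ⊥ hlam
  obtain ⟨b, hb, hlt⟩ := h _ (hX (Set.Nonempty.csSup_mem ⟨b₀, hb₀⟩ hfin))
  exact (le_csSup hfin.bddAbove hb).not_gt hlt

theorem exists_card_eq_initial_superset (hX : X ⊆ Iio lam) (hlam : ⊥ < lam)
    (h : ∀ β < lam, ∃ b ∈ X, β < b) {I : Finset α} (hIX : ↑I ⊆ X) {n : ℕ}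
    (hn : #I ≤ n) : ∃ A : Finset α, #A = n ∧ I ⊆ A ∧ ↑A ⊆ X ∧
      ∀ a ∈ I, ∀ b ∈ A, b < a → b ∈ I := by
  set β := I.sup id
  have hβ : β < lam := (Finset.sup_lt_iff hlam).2 fun a ha => hX (hIX ha)
  have hinf : (X ∩ Ioi β).Infinite := by
    refine infinite_of_forall_exists_gt (fun b hb => hX hb.1) hlam fun γ hγ => ?_
    obtain ⟨b, hb, hlt⟩ := h (max β γ) (max_lt hβ hγ)
    exact ⟨b, ⟨hb, (le_max_left _ _).trans_lt hlt⟩, (le_max_right _ _).trans_lt hlt⟩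
  obtain ⟨t, hts, htcard⟩ := hinf.exists_subset_card_eq (n - #I)
  have hIt : ∀ a ∈ I, ∀ b ∈ t, a < b := fun a ha b hb =>
    (le_sup (f := id) ha).trans_lt (hts hb).2
  refine ⟨I ∪ t, ?_, subset_union_left, ?_, fun a ha b hb hba => ?_⟩
  · rw [card_union_of_disjoint (disjoint_left.2 fun a ha hat => (hIt a ha a hat).false), htcard]
    omega
  · rw [coe_union]
    exact union_subset hIX fun b hb => (hts hb).1
  · exact (mem_union.1 hb).resolve_right fun hbt => (hIt a ha b hbt).not_gt hba

theorem exists_finset_countLT_eq_orderPattern {ι : Type*} [Fintype ι] [Nonempty ι]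
    (hX : X ⊆ Iio lam) (hlam : ⊥ < lam) (h : ∀ β < lam, ∃ b ∈ X, β < b)
    {x : ι → α} (hx : ∀ i, x i ∈ X) {n : ℕ} (hn : Fintype.card ι ≤ n) :
    ∃ A : Finset α, #A = n ∧ ↑A ⊆ X ∧ sInf (↑A : Set α) = ⨅ i, x i ∧
      ∀ i, x i ∈ A ∧ A.countLT (x i) = orderPattern x i := by
  obtain ⟨A, hAn, hIA, hAX, hinit⟩ := exists_card_eq_initial_superset hX hlam h
    (I := Finset.univ.image x) (by simpa [Set.range_subset_iff] using hx) (card_image_le.trans hn)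
  have hxI : ∀ i, x i ∈ Finset.univ.image x := fun i => mem_image_of_mem x (mem_univ i)
  refine ⟨A, hAn, hAX, ?_, fun i => ⟨hIA (hxI i), countLT_eq_of_initial hIA hinit (hxI i)⟩⟩
  rw [sInf_coe_eq_of_initial hIA hinit (univ_nonempty.image x), coe_image, coe_univ, image_univ]
  rfl

end ConditionallyCompleteLinearOrderBot

section Cofinal

variable {lam : Ordinal.{u}} {C S : Set Ordinal.{u}}

theorem isClubIn_iff : IsClubIn lam C ↔ C ⊆ Iio lam ∧ (∀ β < lam, ∃ b ∈ C, β < b) ∧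
    ∀ x < lam, IsSuccLimit x → (∀ β < x, ∃ b ∈ C ∩ Iio x, β < b) → x ∈ C := by
  refine and_congr_right fun hC => and_congr (csSup_eq_iff_forall_lt_exists_gt hC) ?_
  exact forall_congr' fun x => imp_congr_right fun _ => imp_congr_right fun _ =>
    imp_congr_left (csSup_eq_iff_forall_lt_exists_gt inter_subset_right)

theorem isClubIn_Iio (hlam : IsSuccLimit lam) : IsClubIn lam (Iio lam) :=
  isClubIn_iff.2 ⟨subset_rfl, fun β hβ => ⟨β + 1, hlam.add_one_lt hβ, lt_add_one β⟩,
    fun _ hx _ _ => hx⟩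

theorem IsClubIn.inter_Ioi (hC : IsClubIn lam C) {β : Ordinal.{u}} (hβ : β < lam) :
    IsClubIn lam (C ∩ Ioi β) := by
  obtain ⟨hsub, hcof, hclosed⟩ := isClubIn_iff.1 hC
  refine isClubIn_iff.2 ⟨fun b hb => hsub hb.1, fun γ hγ => ?_, fun x hx hxl hcofx => ?_⟩
  · obtain ⟨b, hb, hlt⟩ := hcof (max β γ) (max_lt hβ hγ)
    exact ⟨b, ⟨hb, (le_max_left _ _).trans_lt hlt⟩, (le_max_right _ _).trans_lt hlt⟩
  · obtain ⟨b, ⟨⟨-, hβb⟩, hbx⟩, -⟩ := hcofx 0 hxl.bot_lt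
    refine ⟨hclosed x hx hxl fun γ hγ => ?_, mem_Ioi.2 (hβb.trans hbx)⟩
    obtain ⟨b, ⟨⟨hbC, -⟩, hbx⟩, hγb⟩ := hcofx γ hγ
    exact ⟨b, ⟨hbC, hbx⟩, hγb⟩

theorem IsStationaryIn.exists_gt (hS : IsStationaryIn lam S) (hC : IsClubIn lam C)
    {β : Ordinal.{u}} (hβ : β < lam) : ∃ b ∈ S ∩ C, β < b :=
  let ⟨b, hbS, hbC, hβb⟩ := hS.2 _ (hC.inter_Ioi hβ)
  ⟨b, ⟨hbS, hbC⟩, hβb⟩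

theorem IsStationaryIn.forall_exists_gt (hS : IsStationaryIn lam S) (hlam : IsSuccLimit lam) :
    ∀ β < lam, ∃ b ∈ S, β < b := fun _ hβ =>
  let ⟨b, hb, hβb⟩ := hS.exists_gt (isClubIn_Iio hlam) hβ
  ⟨b, hb.1, hβb⟩

end Cofinal

namespace IsIneffablePrime

variable {k : ℕ} {lam : Ordinal.{u}}

theorem exists_stationary_eq (hin : IsIneffablePrime k lam) (F : Finset Ordinal.{u} → Ordinal.{u}) :
    ∃ S, IsStationaryIn lam S ∧ ∃ c, ∀ A : Finset Ordinal.{u}, #A = k → ↑A ⊆ S →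
      F A < sInf (↑A : Set Ordinal) → F A = c := by
  obtain ⟨S, hS, c, hc⟩ := hin (fun A => if F A < sInf (↑A : Set Ordinal) then F A else 0)
    fun A _ _ => by
      split_ifs with h
      · exact .inl h
      · exact (eq_zero_or_pos _).symm
  refine ⟨S, hS, c, fun A hA hAS hF => ?_⟩
  simpa only [if_pos hF] using hc A hA hAS

theorem exists_cofinal_fiber (hin : IsIneffablePrime k lam) (hk : 0 < k) (hlam : IsSuccLimit lam)
    (h : Ordinal.{u} → Ordinal.{u}) (hh : ∀ a < lam, 0 < a → h a < a) :
    ∃ c, ∀ β < lam, ∃ a, β < a ∧ a < lam ∧ h a = c := by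
  obtain ⟨S, hS, c, hc⟩ := hin.exists_stationary_eq fun A => h (sInf (↑A : Set Ordinal))
  refine ⟨c, fun β hβ => ?_⟩
  obtain ⟨a, haS, hβa⟩ := hS.forall_exists_gt hlam β hβ
  obtain ⟨A, hAk, haA, hAS, hinit⟩ := exists_card_eq_initial_superset hS.1 hlam.bot_lt
    (hS.forall_exists_gt hlam) (I := {a}) (by simpa using haS) (n := k)
    (by rwa [Finset.card_singleton])
  have hmin : sInf (↑A : Set Ordinal) = a := by
    rw [Finset.sInf_coe_eq_of_initial haA hinit (singleton_nonempty a)]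
    simp
  have halam : a < lam := hS.1 haS
  refine ⟨a, hβa, halam, ?_⟩
  simpa only [hmin] using hc A hAk hAS (by simpa only [hmin] using hh a halam (pos_of_gt hβa))

theorem aleph0_lt {κ : Cardinal.{u}} (hin : IsIneffablePrime k κ.ord) (hk : 0 < k)
    (hκ : Cardinal.aleph0 ≤ κ) : Cardinal.aleph0 < κ := by
  refine hκ.lt_of_ne fun h => ?_
  rw [← h, Cardinal.ord_aleph0] at hin
  obtain ⟨c, hc⟩ := hin.exists_cofinal_fiber hk isSuccLimit_omega0 pred fun a ha ha0 => by
    obtain ⟨n, rfl⟩ := lt_omega0.1 ha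
    cases n with
    | zero => simp at ha0
    | succ n => simp
  obtain ⟨a, -, ha, rfl⟩ := hc 0 omega0_pos
  obtain ⟨b, hab, -, hb⟩ := hc _ (isSuccLimit_omega0.succ_lt ((pred_le_self a).trans_lt ha))
  exact (lt_pred_iff_succ_lt.2 hab).ne' hb

theorem isRegular {κ : Cardinal.{u}} (hin : IsIneffablePrime k κ.ord) (hk : 0 < k)
    (hκ : Cardinal.aleph0 ≤ κ) : κ.IsRegular := by
  refine ⟨hκ, not_lt.1 fun hcof => ?_⟩
  set δ := κ.ord.cof.ord
  have hδ : δ < κ.ord := Cardinal.ord_lt_ord.2 hcof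
  obtain ⟨s, hs⟩ := exists_isFundamentalSeq (o := κ.ord) rfl
  let h : Ordinal.{u} → Ordinal.{u} := fun a =>
    if δ < a then sInf {ξ | ∃ hξ : ξ < δ, a ≤ (s ⟨ξ, hξ⟩ : Ordinal)} else 0
  have hmem : ∀ a, δ < a → a < κ.ord → ∃ hξ : h a < δ, a ≤ (s ⟨h a, hξ⟩ : Ordinal) :=
    fun a hδa ha => by
      simp only [h, if_pos hδa]
      obtain ⟨_, ⟨ξ, rfl⟩, hξ⟩ := hs.isCofinal_range ⟨a, ha⟩
      exact csInf_mem (s := {ξ | ∃ hξ : ξ < δ, a ≤ (s ⟨ξ, hξ⟩ : Ordinal)}) ⟨ξ, ξ.2, hξ⟩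
  obtain ⟨c, hc⟩ := hin.exists_cofinal_fiber hk (Cardinal.isSuccLimit_ord hκ) h
    fun a ha ha0 => by
      by_cases hδa : δ < a
      · exact (hmem a hδa ha).1.trans hδa
      · simpa [h, hδa] using ha0
  obtain ⟨a, hδa, ha, hac⟩ := hc δ hδ
  have hcδ : c < δ := hac ▸ (hmem a hδa ha).1
  obtain ⟨b, hb, hbl, hbc⟩ := hc (max δ (s ⟨c, hcδ⟩)) (max_lt hδ (s _).2)
  obtain ⟨hbδ, hle⟩ := hmem b ((le_max_left _ _).trans_lt hb) hbl
  simp only [hbc] at hle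
  exact hle.not_gt ((le_max_right _ _).trans_lt hb)

end IsIneffablePrime

theorem Cardinal.nonempty_arrow_embedding (ι : Type*) [Finite ι] {X : Type*}
    (hX : Cardinal.aleph0 ≤ Cardinal.mk X) : Nonempty ((ι → X) ↪ X) := by
  obtain ⟨n, ⟨e⟩⟩ := Finite.exists_equiv_fin ι
  have : Cardinal.mk (Fin n → X) ≤ Cardinal.mk X := by
    rw [Cardinal.mk_arrow, Cardinal.mk_fin, Cardinal.lift_natCast, Cardinal.lift_uzero,
      Cardinal.power_natCast]
    exact Cardinal.power_nat_le hX
  obtain ⟨f⟩ := this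
  exact ⟨(e.arrowCongr (Equiv.refl X)).toEmbedding.trans f⟩

theorem Cardinal.lift_mk_pi_Iio_lt_cof {ι : Type v} [Finite ι] {κ : Cardinal.{u}}
    (hκ : κ.IsRegular) (hℵ : Cardinal.aleph0 < κ) {γ : Ordinal.{u}} (hγ : γ < κ.ord) :
    Cardinal.lift.{u} (Cardinal.mk (ι → Iio γ)) <
      (Ordinal.lift.{max (u + 1) v} κ.ord).cof := by
  have := Fintype.ofFinite ι
  have key : γ.card ^ Fintype.card ι < κ := by
    rw [← Cardinal.power_natCast]
    exact Cardinal.power_nat_le_max.trans_lt (max_lt (Cardinal.lt_ord.1 hγ) hℵ)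
  rw [← Ordinal.lift_cof, hκ.cof_ord, Cardinal.lift_id'.{u, max (u + 1) v}, Cardinal.mk_arrow,
    Cardinal.mk_fintype ι, Cardinal.mk_Iio_ordinal, Cardinal.lift_natCast, Cardinal.lift_lift,
    ← Cardinal.lift_natCast.{max (u + 1) v, u}, ← Cardinal.lift_power, Cardinal.lift_lt,
    Cardinal.power_natCast]
  exact key

theorem exists_injOn_pi_Iio {ι : Type*} [Finite ι] {κ : Cardinal.{u}}
    (hκ : Cardinal.aleph0 ≤ κ) : ∃ code : (ι → Ordinal.{u}) → Ordinal.{u},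
      MapsTo code (univ.pi fun _ => Iio κ.ord) (Iio κ.ord) ∧
        InjOn code (univ.pi fun _ => Iio κ.ord) := by
  classical
  obtain ⟨e⟩ := Cardinal.nonempty_arrow_embedding ι (X := Iio κ.ord)
    (by simpa [Cardinal.mk_Iio_ordinal] using hκ)
  refine ⟨fun t => if h : t ∈ univ.pi fun _ => Iio κ.ord then e fun i => ⟨t i, h i trivial⟩ else 0,
    fun t ht => ?_, fun t ht t' ht' h => ?_⟩
  · simpa only [dif_pos ht] using (e _).2
  · simp only [dif_pos ht, dif_pos ht'] at h
    funext i
    exact congrArg Subtype.val (congrFun (e.injective (Subtype.ext h)) i)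

-- Positivity is required because the entries of `regressiveTable` that hold no value are `0`.
def closurePoints {ι : Type*} (F : (ι → Ordinal.{u}) → Ordinal.{u}) (lam : Ordinal.{u}) :
    Set Ordinal.{u} :=
  {α | α < lam ∧ 0 < α ∧ MapsTo F (univ.pi fun _ => Iio α) (Iio α)}

theorem isClubIn_closurePoints {ι : Type v} [Finite ι] {κ : Cardinal.{u}} (hκ : κ.IsRegular)
    (hℵ : Cardinal.aleph0 < κ) {F : (ι → Ordinal.{u}) → Ordinal.{u}}
    (hF : MapsTo F (univ.pi fun _ => Iio κ.ord) (Iio κ.ord)) :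
    IsClubIn κ.ord (closurePoints F κ.ord) := by
  have := Fintype.ofFinite ι
  have hlam := Cardinal.isSuccLimit_ord hκ.aleph0_le
  let H : Ordinal.{u} → Ordinal.{u} := fun γ => ⨆ t : ι → Iio γ, F (fun i => t i) + 1
  have hH : ∀ γ < κ.ord, H γ < κ.ord := fun γ hγ =>
    Ordinal.lift_iSup_add_one_lt_of_lt_cof (Cardinal.lift_mk_pi_Iio_lt_cof hκ hℵ hγ)
      fun t => hF fun i _ => (t i).2.trans hγ
  have hFH : ∀ γ t, (∀ i, t i < γ) → F t < H γ := fun γ t ht =>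
    Ordinal.lt_iSup_add_one (fun t : ι → Iio γ => F fun i => t i) fun i => ⟨t i, ht i⟩
  refine isClubIn_iff.2 ⟨fun α hα => hα.1, fun β hβ => ?_, fun x hx hxl hcof => ?_⟩
  · have hβ1 : 0 < β + 1 := pos_of_gt (lt_add_one β)
    refine ⟨nfp H (β + 1), ⟨nfp_lt_ord (by rwa [hκ.cof_ord]) hH (hlam.add_one_lt hβ),
      hβ1.trans_le (le_nfp _ _), fun t ht => ?_⟩, (lt_add_one β).trans_le (le_nfp _ _)⟩
    obtain ⟨n, hn⟩ := lt_nfp_iff.1 <| (Finset.sup_lt_iff (hβ1.trans_le (le_nfp _ _))).2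
      fun i _ => ht i trivial
    refine (hFH _ t fun i => (le_sup (mem_univ i)).trans_lt hn).trans_le ?_
    rw [← Function.iterate_succ_apply' H n]
    exact iterate_le_nfp _ _ _
  · refine ⟨hx, hxl.bot_lt, fun t ht => ?_⟩
    obtain ⟨w, ⟨hw, hwx⟩, hlt⟩ :=
      hcof (univ.sup t) ((Finset.sup_lt_iff hxl.bot_lt).2 fun i _ => ht i trivial)
    exact (hw.2.2 fun i _ => (le_sup (mem_univ i)).trans_lt hlt).trans (mem_Iio.1 hwx)

section RegressiveTable

variable {k : ℕ} {ι : Type*}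

open scoped Classical in
noncomputable def regressiveTable (g : (Fin k → Ordinal.{u}) → ι → Ordinal.{u})
    (A : Finset Ordinal.{u}) : (Fin k → Fin k) × ι → Ordinal.{u} := fun p =>
  if h : ∃ x : Fin k → Ordinal.{u}, (∀ j, x j ∈ A ∧ A.countLT (x j) = p.1 j) ∧
      (⨆ i, g x i) < sInf (↑A : Set Ordinal)
  then g h.choose p.2 else 0

theorem regressiveTable_apply (g : (Fin k → Ordinal.{u}) → ι → Ordinal.{u})
    {A : Finset Ordinal.{u}} {x : Fin k → Ordinal.{u}} {σ : Fin k → Fin k}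
    (hx : ∀ j, x j ∈ A ∧ A.countLT (x j) = σ j) (hreg : (⨆ i, g x i) < sInf (↑A : Set Ordinal))
    (i : ι) : regressiveTable g A (σ, i) = g x i := by
  have h : ∃ x : Fin k → Ordinal.{u}, (∀ j, x j ∈ A ∧ A.countLT (x j) = σ j) ∧
      (⨆ i, g x i) < sInf (↑A : Set Ordinal) := ⟨x, hx, hreg⟩
  rw [regressiveTable, dif_pos h]
  have hx' := h.choose_spec.1
  congr 1
  funext j
  exact A.strictMonoOn_countLT.injOn (hx' j).1 (hx j).1 ((hx' j).2.trans (hx j).2.symm)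

theorem regressiveTable_lt [Finite ι] (g : (Fin k → Ordinal.{u}) → ι → Ordinal.{u})
    {A : Finset Ordinal.{u}} (hA : 0 < sInf (↑A : Set Ordinal)) (p : (Fin k → Fin k) × ι) :
    regressiveTable g A p < sInf (↑A : Set Ordinal) := by
  unfold regressiveTable
  split_ifs with h
  · exact (le_ciSup (Set.finite_range _).bddAbove p.2).trans_lt h.choose_spec.2
  · exact hA

def regressiveArgs (g : (Fin k → Ordinal.{u}) → ι → Ordinal.{u}) (B : Set Ordinal.{u}) :
    Set (Fin k → Ordinal.{u}) :=
  {x | (∀ i, x i ∈ B) ∧ (⨆ i, g x i) < ⨅ i, x i}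

end RegressiveTable

theorem IsIneffablePrime.exists_infinite_eq_of_sameOrderType {k : ℕ} {κ : Cardinal.{u}}
    (hin : IsIneffablePrime k κ.ord) (hk : 0 < k) (hκ : Cardinal.aleph0 ≤ κ) {ι : Type v}
    [Finite ι] (g : (Fin k → Ordinal.{u}) → ι → Ordinal.{u}) :
    ∃ B : Set Ordinal.{u}, B.Infinite ∧ B ⊆ Iio κ.ord ∧ ∀ x₁ ∈ regressiveArgs g B,
      ∀ x₂ ∈ regressiveArgs g B, SameOrderType x₁ x₂ → g x₁ = g x₂ := by
  have : Nonempty (Fin k) := ⟨⟨0, hk⟩⟩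
  have hlam := Cardinal.isSuccLimit_ord hκ
  obtain ⟨code, hmaps, hinj⟩ := exists_injOn_pi_Iio (ι := (Fin k → Fin k) × ι) hκ
  have hC := isClubIn_closurePoints (hin.isRegular hk hκ) (hin.aleph0_lt hk hκ) hmaps
  obtain ⟨S, hS, c, hc⟩ := hin.exists_stationary_eq fun A => code (regressiveTable g A)
  set B := S ∩ closurePoints code κ.ord
  have hBlam : B ⊆ Iio κ.ord := fun b hb => hS.1 hb.1
  have hBcof : ∀ β < κ.ord, ∃ b ∈ B, β < b := fun β hβ => hS.exists_gt hC hβ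
  refine ⟨B, infinite_of_forall_exists_gt hBlam hlam.bot_lt hBcof, hBlam, ?_⟩
  let pattern (x : Fin k → Ordinal.{u}) : Fin k → Fin k := fun j =>
    ⟨orderPattern x j, (orderPattern_lt_card x j).trans_eq (Fintype.card_fin k)⟩
  have key : ∀ x ∈ regressiveArgs g B, ∃ A : Finset Ordinal.{u},
      code (regressiveTable g A) = c ∧ regressiveTable g A ∈ univ.pi (fun _ => Iio κ.ord) ∧
        ∀ i, regressiveTable g A (pattern x, i) = g x i := by
    rintro x ⟨hxB, hreg⟩
    obtain ⟨A, hAk, hAB, hAmin, hxA⟩ :=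
      exists_finset_countLT_eq_orderPattern hBlam hlam.bot_lt hBcof hxB (Fintype.card_fin k).le
    obtain ⟨i₀, hi₀⟩ := ciInf_mem x
    have hminC : sInf (↑A : Set Ordinal) ∈ closurePoints code κ.ord := hAmin ▸ hi₀ ▸ (hxB i₀).2
    have hlt := regressiveTable_lt g hminC.2.1
    refine ⟨A, hc A hAk (hAB.trans inter_subset_left) (hminC.2.2 fun p _ => hlt p),
      fun p _ => (hlt p).trans hminC.1, fun i => ?_⟩
    exact regressiveTable_apply g hxA (hAmin ▸ hreg) i
  intro x₁ hx₁ x₂ hx₂ hsame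
  obtain ⟨A₁, hc₁, hA₁, happ₁⟩ := key x₁ hx₁
  obtain ⟨A₂, hc₂, hA₂, happ₂⟩ := key x₂ hx₂
  have hpattern : pattern x₁ = pattern x₂ :=
    funext fun j => Fin.ext (congrFun hsame.orderPattern_eq j)
  funext i
  rw [← happ₁, ← happ₂, hinj hA₁ hA₂ (hc₁.trans hc₂.symm), hpattern]

theorem stmt_16_general (k : ℕ) (hk : 0 < k) (κ : Cardinal)
    (hκ : Cardinal.aleph0 ≤ κ) (hin : IsIneffablePrime k κ.ord)
    (g : (Fin k → Ordinal) → (Fin k → Ordinal)) :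
    ∃ B : Set Ordinal, B.Infinite ∧ B ⊆ Set.Iio κ.ord ∧
      {y : Fin k → Ordinal | ∃ x : Fin k → Ordinal, (∀ i, x i ∈ B) ∧
        g x = y ∧ (⨆ i, y i) < ⨅ i, x i}.Finite ∧
      {y : Fin k → Ordinal | ∃ x : Fin k → Ordinal, (∀ i, x i ∈ B) ∧
        g x = y ∧ (⨆ i, y i) < ⨅ i, x i}.ncard ≤ ot k := by
  obtain ⟨B, hBinf, hBlam, hB⟩ := hin.exists_infinite_eq_of_sameOrderType hk hκ g
  have hvalues : {y : Fin k → Ordinal | ∃ x : Fin k → Ordinal, (∀ i, x i ∈ B) ∧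
      g x = y ∧ (⨆ i, y i) < ⨅ i, x i} = g '' regressiveArgs g B := by
    ext y
    constructor
    · rintro ⟨x, hx, rfl, hreg⟩
      exact ⟨x, ⟨hx, hreg⟩, rfl⟩
    · rintro ⟨x, ⟨hx, hreg⟩, rfl⟩
      exact ⟨x, hx, rfl, hreg⟩
  refine ⟨B, hBinf, hBlam, ?_⟩
  rw [hvalues]
  exact finite_image_and_ncard_le_ot g _ hB

/-- Lemma 4.10: if `λ` is `k`-ineffable′ then any `g : λ^k → λ^k` has at most
`ot k` regressive values on `B^k` for some infinite `B ⊆ λ`. -/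
theorem stmt_16 (k : ℕ) (hk : 0 < k) (κ : Cardinal)
    (hκ : Cardinal.aleph0 ≤ κ) (hin : IsIneffablePrime k κ.ord)
    (g : (Fin k → Ordinal) → (Fin k → Ordinal))
    (hg : ∀ x : Fin k → Ordinal, (∀ i, x i < κ.ord) → ∀ i, g x i < κ.ord) :
    ∃ B : Set Ordinal, B.Infinite ∧ B ⊆ Set.Iio κ.ord ∧
      {y : Fin k → Ordinal | ∃ x : Fin k → Ordinal, (∀ i, x i ∈ B) ∧
        g x = y ∧ (⨆ i, y i) < ⨅ i, x i}.Finite ∧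
      {y : Fin k → Ordinal | ∃ x : Fin k → Ordinal, (∀ i, x i ∈ B) ∧
        g x = y ∧ (⨆ i, y i) < ⨅ i, x i}.ncard ≤ ot k :=
  stmt_16_general k hk κ hκ hin g
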